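/- Let $1 \le p, q \le 2$. Then every block sequence $(f_j)$ of the biparameter Haar system in $H^p(H^q)$ satisfies the lower $2$-estimate with constant $1$: $\|\sum_{j=1}^n f_j\|_{H^p(H^q)} \ge (\sum_{j=1}^n \|f_j\|_{H^p(H^q)}^2)^{1/2}$. -/

import Mathlib

open Finset MeasureTheory

/-- The `L^∞`-normalized Haar function on the dyadic interval `[k/2^n, (k+1)/2^n)`. -/
noncomputable def haar (n k : ℕ) (x : ℝ) : ℝ :=
  if (k : ℝ) / 2 ^ n ≤ x ∧ x < ((k : ℝ) + 1 / 2) / 2 ^ n then 1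
  else if ((k : ℝ) + 1 / 2) / 2 ^ n ≤ x ∧ x < ((k : ℝ) + 1) / 2 ^ n then -1
  else 0

/-- The biparameter Haar function `h_{I,J}(x,y) = h_I(x) h_J(y)`. -/
noncomputable def haar2 (I J : ℕ × ℕ) (x y : ℝ) : ℝ := haar I.1 I.2 x * haar J.1 J.2 y

/-- The `H^p(H^q)` (mixed-norm Hardy space) norm of the finite linear combination
`∑_{IJ ∈ s} a IJ • h_{IJ}` of biparameter Haar functions, given by the square function formula
`(∫₀¹ (∫₀¹ (∑_{IJ ∈ s} a_{IJ}² h_{IJ}²(x,y))^{q/2} dy)^{p/q} dx)^{1/p}`. -/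
noncomputable def HpHqNorm (p q : ℝ) (s : Finset ((ℕ × ℕ) × (ℕ × ℕ)))
    (a : (ℕ × ℕ) × (ℕ × ℕ) → ℝ) : ℝ :=
  (∫ x in Set.Icc (0 : ℝ) 1,
      (∫ y in Set.Icc (0 : ℝ) 1,
        (∑ IJ ∈ s, (a IJ * haar2 IJ.1 IJ.2 x y) ^ 2) ^ (q / 2)) ^ (p / q)) ^ (1 / p)

/-! With `𝕊²` the squared biparameter square function, `‖f‖²_{H^p(H^q)}` is the mixed
`L^{p/2}_x(L^{q/2}_y)` gauge of `𝕊²f`, and disjoint Haar spectra give `𝕊²(∑ fⱼ) = ∑ 𝕊²fⱼ`.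
For an exponent `r ≤ 1` the `L^r` gauge is superadditive on nonnegative functions (reverse
Minkowski, from the concavity of `t ↦ t ^ r`). Applying this first in `y` and then in `x` gives
`∑ ‖fⱼ‖² ≤ ‖∑ fⱼ‖²`. -/

open scoped ENNReal
open Function (uncurry)

namespace ENNReal

theorem weighted_rpow_add_le_add_rpow {r : ℝ} (hr0 : 0 < r) (hr1 : r ≤ 1) {l m : ℝ≥0∞}
    (hl0 : l ≠ 0) (hm0 : m ≠ 0) (hlm : l + m = 1) (x y : ℝ≥0∞) :
    l ^ (1 - r) * x ^ r + m ^ (1 - r) * y ^ r ≤ (x + y) ^ r := by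
  have hl : l ≠ ⊤ := ne_top_of_le_ne_top one_ne_top (hlm ▸ le_self_add)
  have hm : m ≠ ⊤ := ne_top_of_le_ne_top one_ne_top (hlm ▸ le_add_self)
  have weight (w z : ℝ≥0∞) (hw0 : w ≠ 0) (hw : w ≠ ⊤) : w * (z / w) ^ r = w ^ (1 - r) * z ^ r := by
    rw [div_rpow_of_nonneg _ _ hr0.le, rpow_sub _ _ hw0 hw, rpow_one, div_eq_mul_inv,
      div_eq_mul_inv]
    ring
  have hinv (z : ℝ≥0∞) : (z ^ r) ^ (1 / r) = z := by
    rw [← rpow_mul, mul_one_div_cancel hr0.ne', rpow_one]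
  -- concavity of `t ↦ t ^ r` at the points `x / l` and `y / m`, from the power mean inequality
  have hmean := rpow_arith_mean_le_arith_mean2_rpow l m ((x / l) ^ r) ((y / m) ^ r) hlm
    (one_le_one_div hr0 hr1)
  rw [hinv, hinv, ENNReal.mul_div_cancel hl0 hl, ENNReal.mul_div_cancel hm0 hm] at hmean
  rw [← weight l x hl0 hl, ← weight m y hm0 hm]
  calc l * (x / l) ^ r + m * (y / m) ^ r
      = ((l * (x / l) ^ r + m * (y / m) ^ r) ^ (1 / r)) ^ r := by
        rw [← rpow_mul, one_div_mul_cancel hr0.ne', rpow_one]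
    _ ≤ (x + y) ^ r := rpow_le_rpow hmean hr0.le

end ENNReal

namespace MeasureTheory

variable {α β ι : Type*} [MeasurableSpace α] [MeasurableSpace β] {μ : Measure α} {ν : Measure β}

theorem eLpNorm'_add_eLpNorm'_le_of_le_one {r : ℝ} (hr0 : 0 < r) (hr1 : r ≤ 1)
    {f g : α → ℝ≥0∞} (hf : AEMeasurable f μ) :
    eLpNorm' f r μ + eLpNorm' g r μ ≤ eLpNorm' (f + g) r μ := by
  set A := eLpNorm' f r μ
  set B := eLpNorm' g r μ
  have hA_le : A ≤ eLpNorm' (f + g) r μ :=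
    eLpNorm'_mono_enorm_ae hr0.le (ae_of_all _ fun _ => by simp)
  have hB_le : B ≤ eLpNorm' (f + g) r μ :=
    eLpNorm'_mono_enorm_ae hr0.le (ae_of_all _ fun _ => by simp)
  rcases eq_or_ne A 0 with hA0 | hA0
  · simpa [hA0] using hB_le
  rcases eq_or_ne B 0 with hB0 | hB0
  · simpa [hB0] using hA_le
  rcases eq_or_ne A ⊤ with hA | hA
  · simp_all
  rcases eq_or_ne B ⊤ with hB | hB
  · simp_all
  set C := A + B
  have hC0 : C ≠ 0 := by simp [C, hA0]
  have hC : C ≠ ⊤ := ENNReal.add_ne_top.2 ⟨hA, hB⟩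
  have hpow (F : α → ℝ≥0∞) : ∫⁻ a, F a ^ r ∂μ = eLpNorm' F r μ ^ r := by
    rw [eLpNorm', ← ENNReal.rpow_mul, one_div_mul_cancel hr0.ne', ENNReal.rpow_one]
    simp
  have hweights : A / C + B / C = 1 := by
    rw [ENNReal.div_add_div_same, ENNReal.div_self hC0 hC]
  have share {D : ℝ≥0∞} (hD0 : D ≠ 0) (hD : D ≠ ⊤) :
      (D / C) ^ (1 - r) * D ^ r = D / C ^ (1 - r) := by
    rw [ENNReal.div_rpow_of_nonneg _ _ (by linarith), div_eq_mul_inv, div_eq_mul_inv,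
      mul_right_comm, ← ENNReal.rpow_add _ _ hD0 hD, sub_add_cancel, ENNReal.rpow_one]
  have key : C ^ r ≤ eLpNorm' (f + g) r μ ^ r := calc
    C ^ r = (A / C) ^ (1 - r) * A ^ r + (B / C) ^ (1 - r) * B ^ r := by
      rw [share hA0 hA, share hB0 hB, ENNReal.div_add_div_same]
      conv_lhs => rw [← sub_sub_cancel 1 r, ENNReal.rpow_sub _ _ hC0 hC, ENNReal.rpow_one]
    _ = ∫⁻ a, (A / C) ^ (1 - r) * f a ^ r + (B / C) ^ (1 - r) * g a ^ r ∂μ := by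
      rw [lintegral_add_left' ((hf.pow_const r).const_mul _), lintegral_const_mul' _ _ ?_,
        lintegral_const_mul' _ _ ?_, hpow, hpow]
      all_goals exact ENNReal.rpow_ne_top_of_nonneg (by linarith) (ENNReal.div_ne_top ‹_› hC0)
    _ ≤ ∫⁻ a, (f + g) a ^ r ∂μ := lintegral_mono fun a =>
      ENNReal.weighted_rpow_add_le_add_rpow hr0 hr1 (ENNReal.div_pos hA0 hC).ne'
        (ENNReal.div_pos hB0 hC).ne' hweights (f a) (g a)
    _ = eLpNorm' (f + g) r μ ^ r := hpow _
  exact (ENNReal.rpow_le_rpow_iff hr0).1 key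


theorem sum_eLpNorm'_le_eLpNorm'_sum_of_le_one {r : ℝ} (hr0 : 0 < r) (hr1 : r ≤ 1)
    (t : Finset ι) {f : ι → α → ℝ≥0∞} (hf : ∀ i ∈ t, AEMeasurable (f i) μ) :
    ∑ i ∈ t, eLpNorm' (f i) r μ ≤ eLpNorm' (∑ i ∈ t, f i) r μ := by
  classical
  induction t using Finset.induction with
  | empty => simp
  | insert i t hi ih =>
    rw [sum_insert hi, sum_insert hi]
    calc eLpNorm' (f i) r μ + ∑ j ∈ t, eLpNorm' (f j) r μ
        ≤ eLpNorm' (f i) r μ + eLpNorm' (∑ j ∈ t, f j) r μ :=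
          add_le_add_right (ih fun j hj => hf j (mem_insert_of_mem hj)) _
      _ ≤ eLpNorm' (f i + ∑ j ∈ t, f j) r μ :=
          eLpNorm'_add_eLpNorm'_le_of_le_one hr0 hr1 (hf i (mem_insert_self i t))

theorem lintegral_rpow_ne_top_of_le [IsFiniteMeasure μ] {f : α → ℝ≥0∞} {C : ℝ≥0∞} (hC : C ≠ ⊤)
    (hf : ∀ a, f a ≤ C) {s : ℝ} (hs : 0 ≤ s) : ∫⁻ a, f a ^ s ∂μ ≠ ⊤ := by
  refine ne_top_of_le_ne_top ?_ (lintegral_mono fun a => ENNReal.rpow_le_rpow (hf a) hs)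
  rw [lintegral_const]
  exact ENNReal.mul_ne_top (ENNReal.rpow_ne_top_of_nonneg hs hC) (measure_ne_top μ _)

theorem eLpNorm'_ne_top_of_le [IsFiniteMeasure μ] {f : α → ℝ≥0∞} {C : ℝ≥0∞} (hC : C ≠ ⊤)
    (hf : ∀ a, f a ≤ C) {r : ℝ} (hr : 0 ≤ r) : eLpNorm' f r μ ≠ ⊤ := by
  rw [eLpNorm']
  simp only [enorm_eq_self]
  exact ENNReal.rpow_ne_top_of_nonneg (by positivity) (lintegral_rpow_ne_top_of_le hC hf hr)

theorem measurable_eLpNorm'_prod_right [SFinite ν] {S : α → β → ℝ≥0∞}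
    (hS : Measurable (uncurry S)) (s : ℝ) : Measurable fun x => eLpNorm' (S x) s ν := by
  simp only [eLpNorm', enorm_eq_self]
  exact ((hS.pow_const s).lintegral_prod_right').pow_const _

noncomputable def mixedENorm (r s : ℝ) (μ : Measure α) (ν : Measure β) (S : α → β → ℝ≥0∞) : ℝ≥0∞ :=
  eLpNorm' (fun x => eLpNorm' (S x) s ν) r μ

theorem mixedENorm_eq_lintegral (r s : ℝ) (S : α → β → ℝ≥0∞) :
    mixedENorm r s μ ν S = (∫⁻ x, (∫⁻ y, S x y ^ s ∂ν) ^ (r / s) ∂μ) ^ (1 / r) := by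
  simp only [mixedENorm, eLpNorm', enorm_eq_self, ← ENNReal.rpow_mul, one_div_mul_eq_div]

theorem mixedENorm_ne_top_of_le [IsFiniteMeasure μ] [IsFiniteMeasure ν] {S : α → β → ℝ≥0∞}
    {C : ℝ≥0∞} (hC : C ≠ ⊤) (hS : ∀ x y, S x y ≤ C) {r s : ℝ} (hr : 0 ≤ r) (hs : 0 ≤ s) :
    mixedENorm r s μ ν S ≠ ⊤ :=
  eLpNorm'_ne_top_of_le (eLpNorm'_ne_top_of_le hC (fun _ => le_rfl) hs)
    (fun x => eLpNorm'_mono_enorm_ae hs (ae_of_all _ fun y => by simpa using hS x y)) hr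

theorem sum_mixedENorm_le_mixedENorm_sum [SFinite ν] {r s : ℝ} (hr0 : 0 < r) (hr1 : r ≤ 1)
    (hs0 : 0 < s) (hs1 : s ≤ 1) (t : Finset ι) {S : ι → α → β → ℝ≥0∞}
    (hS : ∀ i ∈ t, Measurable (uncurry (S i))) :
    ∑ i ∈ t, mixedENorm r s μ ν (S i) ≤ mixedENorm r s μ ν fun x y => ∑ i ∈ t, S i x y := calc
  ∑ i ∈ t, mixedENorm r s μ ν (S i)
      ≤ eLpNorm' (∑ i ∈ t, fun x => eLpNorm' (S i x) s ν) r μ :=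
    sum_eLpNorm'_le_eLpNorm'_sum_of_le_one hr0 hr1 t fun i hi =>
      (measurable_eLpNorm'_prod_right (hS i hi) s).aemeasurable
  _ ≤ mixedENorm r s μ ν fun x y => ∑ i ∈ t, S i x y := by
    refine eLpNorm'_mono_enorm_ae hr0.le (ae_of_all _ fun x => ?_)
    have := sum_eLpNorm'_le_eLpNorm'_sum_of_le_one hs0 hs1 t (μ := ν) (f := fun i => S i x)
      fun i hi => ((hS i hi).comp measurable_prodMk_left).aemeasurable
    simpa [Finset.sum_fn] using this

theorem integral_rpow_integral_rpow_eq_toReal [SFinite ν] {G : α → β → ℝ}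
    (hG : Measurable (uncurry G)) (hG0 : ∀ x y, 0 ≤ G x y) {s t : ℝ} (hs : 0 ≤ s) (ht : 0 ≤ t)
    (hfin : ∀ x, ∫⁻ y, ENNReal.ofReal (G x y) ^ s ∂ν ≠ ⊤) :
    ∫ x, (∫ y, G x y ^ s ∂ν) ^ t ∂μ
      = (∫⁻ x, (∫⁻ y, ENNReal.ofReal (G x y) ^ s ∂ν) ^ t ∂μ).toReal := by
  have hinner (x : α) : ∫ y, G x y ^ s ∂ν = (∫⁻ y, ENNReal.ofReal (G x y) ^ s ∂ν).toReal := by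
    have hGx : Measurable fun y => G x y := hG.comp measurable_prodMk_left
    rw [integral_eq_lintegral_of_nonneg_ae (f := fun y => G x y ^ s)
      (ae_of_all _ fun y => Real.rpow_nonneg (hG0 x y) s) (hGx.pow_const s).aestronglyMeasurable]
    simp only [← ENNReal.ofReal_rpow_of_nonneg (hG0 x _) hs]
  simp_rw [hinner, ENNReal.toReal_rpow]
  refine integral_toReal ?_ (ae_of_all _ fun x => ENNReal.rpow_lt_top_of_nonneg ht (hfin x))
  exact ((hG.ennreal_ofReal.pow_const s).lintegral_prod_right').pow_const t |>.aemeasurable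

end MeasureTheory

theorem measurable_haar (n k : ℕ) : Measurable (haar n k) :=
  Measurable.ite measurableSet_Ico measurable_const
    (Measurable.ite measurableSet_Ico measurable_const measurable_const)

theorem haar_sq_le_one (n k : ℕ) (x : ℝ) : haar n k x ^ 2 ≤ 1 := by
  unfold haar; split_ifs <;> norm_num

/-- `𝕊(f)²` for `f = ∑_{IJ ∈ s} a IJ • h_{IJ}`. -/
noncomputable def haarSqFun (s : Finset ((ℕ × ℕ) × (ℕ × ℕ))) (a : (ℕ × ℕ) × (ℕ × ℕ) → ℝ)
    (x y : ℝ) : ℝ :=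
  ∑ IJ ∈ s, (a IJ * haar2 IJ.1 IJ.2 x y) ^ 2

section haarSqFun

variable (s : Finset ((ℕ × ℕ) × (ℕ × ℕ))) (a : (ℕ × ℕ) × (ℕ × ℕ) → ℝ)

theorem measurable_haarSqFun : Measurable (uncurry (haarSqFun s a)) :=
  Finset.measurable_sum _ fun _ _ => (measurable_const.mul
    (((measurable_haar _ _).comp measurable_fst).mul
      ((measurable_haar _ _).comp measurable_snd))).pow_const 2

theorem haarSqFun_nonneg (x y : ℝ) : 0 ≤ haarSqFun s a x y :=
  sum_nonneg fun _ _ => sq_nonneg _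

theorem haarSqFun_le_sum_sq (x y : ℝ) : haarSqFun s a x y ≤ ∑ IJ ∈ s, a IJ ^ 2 := by
  refine sum_le_sum fun IJ _ => ?_
  rw [mul_pow, haar2, mul_pow]
  exact mul_le_of_le_one_right (sq_nonneg _)
    (mul_le_one₀ (haar_sq_le_one _ _ _) (sq_nonneg _) (haar_sq_le_one _ _ _))

end haarSqFun

theorem haarSqFun_biUnion {n : ℕ} {s : Fin n → Finset ((ℕ × ℕ) × (ℕ × ℕ))}
    (a : Fin n → (ℕ × ℕ) × (ℕ × ℕ) → ℝ) (hdisj : ∀ i j, i ≠ j → Disjoint (s i) (s j))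
    (x y : ℝ) :
    haarSqFun (univ.biUnion s) (fun IJ => ∑ j, if IJ ∈ s j then a j IJ else 0) x y
      = ∑ j, haarSqFun (s j) (a j) x y := by
  rw [haarSqFun, sum_biUnion fun i _ j _ hij => hdisj i j hij]
  refine sum_congr rfl fun j _ => sum_congr rfl fun IJ hIJ => ?_
  rw [sum_eq_single j (fun i _ hij => if_neg fun hi => disjoint_left.1 (hdisj i j hij) hi hIJ)
    (fun hj => absurd (mem_univ j) hj), if_pos hIJ]

local notation "𝕀" => volume.restrict (Set.Icc (0 : ℝ) 1)

theorem HpHqNorm_eq_sqrt_mixedENorm {p q : ℝ} (hp : 0 < p) (hq : 0 < q)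
    (s : Finset ((ℕ × ℕ) × (ℕ × ℕ))) (a : (ℕ × ℕ) × (ℕ × ℕ) → ℝ) :
    HpHqNorm p q s a =
      √(mixedENorm (p / 2) (q / 2) 𝕀 𝕀 fun x y => ENNReal.ofReal (haarSqFun s a x y)).toReal := by
  have hfin (x : ℝ) : ∫⁻ y in Set.Icc 0 1, ENNReal.ofReal (haarSqFun s a x y) ^ (q / 2) ≠ ⊤ :=
    lintegral_rpow_ne_top_of_le ENNReal.ofReal_ne_top
      (fun y => ENNReal.ofReal_le_ofReal (haarSqFun_le_sum_sq s a x y)) (by positivity)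
  change (∫ x in Set.Icc 0 1, (∫ y in Set.Icc 0 1, haarSqFun s a x y ^ (q / 2)) ^ (p / q))
    ^ (1 / p) = _
  rw [integral_rpow_integral_rpow_eq_toReal (measurable_haarSqFun s a) (haarSqFun_nonneg s a)
      (by positivity) (by positivity) hfin, mixedENorm_eq_lintegral,
    div_div_div_cancel_right₀ two_ne_zero, Real.sqrt_eq_rpow, ← ENNReal.toReal_rpow,
    ← Real.rpow_mul ENNReal.toReal_nonneg]
  congr 1
  field_simp

theorem lower_two_estimate_HpHq_general (p q : ℝ) (hp1 : 1 ≤ p) (hp2 : p ≤ 2)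
    (hq1 : 1 ≤ q) (hq2 : q ≤ 2)
    (n : ℕ) (s : Fin n → Finset ((ℕ × ℕ) × (ℕ × ℕ)))
    (a : Fin n → (ℕ × ℕ) × (ℕ × ℕ) → ℝ)
    (hdisj : ∀ i j, i ≠ j → Disjoint (s i) (s j)) :
    (∑ j, HpHqNorm p q (s j) (a j) ^ 2) ^ ((1 : ℝ) / 2)
      ≤ HpHqNorm p q (Finset.univ.biUnion s)
          (fun IJ => ∑ j, if IJ ∈ s j then a j IJ else 0) := by
  have hp0 : 0 < p := by linarith
  have hq0 : 0 < q := by linarith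
  set b := fun IJ => ∑ j, if IJ ∈ s j then a j IJ else 0
  have hblocks (x y : ℝ) : ENNReal.ofReal (haarSqFun (univ.biUnion s) b x y)
      = ∑ j, ENNReal.ofReal (haarSqFun (s j) (a j) x y) := by
    rw [haarSqFun_biUnion a hdisj, ENNReal.ofReal_sum_of_nonneg fun j _ => haarSqFun_nonneg _ _ _ _]
  have hsuper : ∑ j, mixedENorm (p / 2) (q / 2) 𝕀 𝕀
        (fun x y => ENNReal.ofReal (haarSqFun (s j) (a j) x y))
      ≤ mixedENorm (p / 2) (q / 2) 𝕀 𝕀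
        fun x y => ENNReal.ofReal (haarSqFun (univ.biUnion s) b x y) := by
    simp_rw [hblocks]
    exact sum_mixedENorm_le_mixedENorm_sum (by positivity) (by linarith) (by positivity)
      (by linarith) _ fun j _ => (measurable_haarSqFun _ _).ennreal_ofReal
  have hfin : (mixedENorm (p / 2) (q / 2) 𝕀 𝕀 fun x y =>
      ENNReal.ofReal (haarSqFun (univ.biUnion s) b x y)) ≠ ⊤ :=
    mixedENorm_ne_top_of_le ENNReal.ofReal_ne_top
      (fun x y => ENNReal.ofReal_le_ofReal (haarSqFun_le_sum_sq _ _ x y)) (by positivity)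
      (by positivity)
  simp only [HpHqNorm_eq_sqrt_mixedENorm hp0 hq0, Real.sq_sqrt ENNReal.toReal_nonneg,
    ← Real.sqrt_eq_rpow]
  rw [← ENNReal.toReal_sum fun j _ => ne_top_of_le_ne_top hfin
    ((single_le_sum (fun _ _ => zero_le) (mem_univ j)).trans hsuper)]
  exact Real.sqrt_le_sqrt (ENNReal.toReal_mono hfin hsuper)

/-- Lower 2-estimate with constant 1 for block sequences (disjoint Haar spectra)
in `H^p(H^q)`, `1 ≤ p, q ≤ 2`. -/
theorem lower_two_estimate_HpHq (p q : ℝ) (hp1 : 1 ≤ p) (hp2 : p ≤ 2)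
    (hq1 : 1 ≤ q) (hq2 : q ≤ 2)
    (n : ℕ) (s : Fin n → Finset ((ℕ × ℕ) × (ℕ × ℕ)))
    (a : Fin n → (ℕ × ℕ) × (ℕ × ℕ) → ℝ)
    (hdisj : ∀ i j, i ≠ j → Disjoint (s i) (s j))
    (hnonzero : ∀ j, ∃ IJ ∈ s j, a j IJ ≠ 0) :
    (∑ j, HpHqNorm p q (s j) (a j) ^ 2) ^ ((1 : ℝ) / 2)
      ≤ HpHqNorm p q (Finset.univ.biUnion s)
          (fun IJ => ∑ j, if IJ ∈ s j then a j IJ else 0) :=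
  lower_two_estimate_HpHq_general p q hp1 hp2 hq1 hq2 n s a hdisj
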